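/- Let k be a positive integer and let (x, y) be real numbers satisfying (1+x)^4 + (k−1)x^4 = k·y^4 and (1+x−y)^4 + (k−1)(x−y)^4 = 2 with y > 0. Let a_1, …, a_k ∈ ℝ^k be the k cyclic permutations of the vector (1+x, x, x, …, x), and let a_{k+1} = (y, y, …, y). Then the set {a_1, …, a_{k+1}} is an equilateral set of k+1 points in ℓ_4^k with common distance 2^{1/4}, and ‖a_i‖_4 = k^{1/4}·y for every i = 1, …, k+1. -/

import Mathlib

/-!
Write `v_i = x·𝟙 + e_i` for `i < k` and `v_k = y·𝟙`. The difference of two of the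
first `k` points is `e_i - e_j`, whose fourth powers sum to `2`; the difference of `v_i`
and `v_k` has one entry `1 + x - y` and `k - 1` entries `x - y`, so the second equation of
the system says exactly that its fourth powers sum to `2`. Likewise the first equation says
that every `v_i` has the same sum of fourth powers `k y⁴` as `v_k`.
-/

open Finset

/-- The 4-norm on `ℝ^k`. -/
noncomputable def norm4 {k : ℕ} (x : Fin k → ℝ) : ℝ :=
  (∑ m, (x m) ^ 4) ^ ((1 : ℝ) / 4)

theorem Fintype.sum_ite_eq_add_card_sub_one_mul {ι R : Type*} [Fintype ι] [DecidableEq ι]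
    [CommRing R] (i : ι) (A B : R) :
    ∑ m, (if m = i then A else B) = A + ((Fintype.card ι : R) - 1) * B := by
  have hcard : 1 ≤ Fintype.card ι := Fintype.card_pos_iff.mpr ⟨i⟩
  rw [Fintype.sum_eq_add_sum_compl i, if_pos rfl,
    sum_ite_of_false fun m hm => by simpa using hm]
  simp [card_compl, Nat.cast_sub hcard]

theorem norm4_zero {k : ℕ} : norm4 (0 : Fin k → ℝ) = 0 := by
  simp [norm4]

theorem norm4_sub_comm {k : ℕ} (u v : Fin k → ℝ) : norm4 (u - v) = norm4 (v - u) := by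
  simp only [norm4, Pi.sub_apply]
  congr 1
  exact sum_congr rfl fun m _ => by ring

theorem norm4_eq_of_sum_pow_four {k : ℕ} {u : Fin k → ℝ} {y : ℝ} (hy : 0 ≤ y)
    (hu : ∑ m, u m ^ 4 = k * y ^ 4) : norm4 u = (k : ℝ) ^ ((1 : ℝ) / 4) * y := by
  rw [norm4, hu, Real.mul_rpow (Nat.cast_nonneg k) (by positivity), one_div]
  congr 1
  exact_mod_cast Real.pow_rpow_inv_natCast hy four_ne_zero

section SimplexVertex

variable {k : ℕ} (x y : ℝ)

noncomputable def simplexVertex : Fin (k + 1) → Fin k → ℝ :=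
  Fin.lastCases (fun _ => y) fun i m => if m = i then 1 + x else x

theorem eq_simplexVertex {a : Fin (k + 1) → Fin k → ℝ}
    (ha : ∀ i : Fin (k + 1), ∀ m : Fin k,
      a i m = if (i : ℕ) = k then y else if (m : ℕ) = (i : ℕ) then 1 + x else x) :
    a = simplexVertex x y := by
  funext i m
  induction i using Fin.lastCases with
  | last => simp [ha, simplexVertex]
  | cast i => simp [ha, simplexVertex, i.isLt.ne, Fin.val_inj]

theorem sum_pow_four_simplexVertex_last :
    ∑ m, simplexVertex x y (Fin.last k) m ^ 4 = k * y ^ 4 := by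
  simp [simplexVertex]

theorem sum_pow_four_simplexVertex_castSucc (i : Fin k) :
    ∑ m, simplexVertex x y i.castSucc m ^ 4 = (1 + x) ^ 4 + ((k : ℝ) - 1) * x ^ 4 := by
  simp only [simplexVertex, Fin.lastCases_castSucc, apply_ite (· ^ 4)]
  simpa using Fintype.sum_ite_eq_add_card_sub_one_mul i ((1 + x) ^ 4) (x ^ 4)

theorem sum_pow_four_simplexVertex_castSucc_sub_last (i : Fin k) :
    ∑ m, (simplexVertex x y i.castSucc m - simplexVertex x y (Fin.last k) m) ^ 4
      = (1 + x - y) ^ 4 + ((k : ℝ) - 1) * (x - y) ^ 4 := by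
  simp only [simplexVertex, Fin.lastCases_castSucc, Fin.lastCases_last, ite_sub,
    apply_ite (· ^ 4)]
  simpa using Fintype.sum_ite_eq_add_card_sub_one_mul i ((1 + x - y) ^ 4) ((x - y) ^ 4)

theorem sum_pow_four_simplexVertex_castSucc_sub_castSucc {i j : Fin k} (hij : i ≠ j) :
    ∑ m, (simplexVertex x y i.castSucc m - simplexVertex x y j.castSucc m) ^ 4 = 2 := by
  have hterm : ∀ m, (simplexVertex x y i.castSucc m - simplexVertex x y j.castSucc m) ^ 4
      = (if m = i then 1 else 0) + (if m = j then 1 else 0) := by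
    intro m
    simp only [simplexVertex, Fin.lastCases_castSucc]
    split_ifs <;> subst_vars <;> first | exact absurd rfl hij | ring
  simp only [hterm, sum_add_distrib, sum_ite_eq', mem_univ, if_true]
  norm_num

variable {x y}

theorem norm4_simplexVertex_sub (h2 : (1 + x - y) ^ 4 + ((k : ℝ) - 1) * (x - y) ^ 4 = 2)
    {i j : Fin (k + 1)} (hij : i ≠ j) :
    norm4 (simplexVertex x y i - simplexVertex x y j) = (2 : ℝ) ^ ((1 : ℝ) / 4) := by
  have to_last (l : Fin k) :
      norm4 (simplexVertex x y l.castSucc - simplexVertex x y (Fin.last k))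
        = (2 : ℝ) ^ ((1 : ℝ) / 4) := by
    simp only [norm4, Pi.sub_apply]
    rw [sum_pow_four_simplexVertex_castSucc_sub_last, h2]
  induction i using Fin.lastCases with
  | last =>
    induction j using Fin.lastCases with
    | last => exact absurd rfl hij
    | cast j => rw [norm4_sub_comm, to_last]
  | cast i =>
    induction j using Fin.lastCases with
    | last => exact to_last i
    | cast j =>
      simp only [norm4, Pi.sub_apply]
      rw [sum_pow_four_simplexVertex_castSucc_sub_castSucc x y
        ((Fin.castSucc_injective k).ne_iff.mp hij)]

theorem norm4_simplexVertex (hy : 0 ≤ y)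
    (h1 : (1 + x) ^ 4 + ((k : ℝ) - 1) * x ^ 4 = (k : ℝ) * y ^ 4) (i : Fin (k + 1)) :
    norm4 (simplexVertex x y i) = (k : ℝ) ^ ((1 : ℝ) / 4) * y := by
  refine norm4_eq_of_sum_pow_four hy ?_
  induction i using Fin.lastCases with
  | last => exact sum_pow_four_simplexVertex_last x y
  | cast i => rw [sum_pow_four_simplexVertex_castSucc, h1]

end SimplexVertex

theorem stmt18_general (k : ℕ) (x y : ℝ) (hy : 0 < y)
    (h1 : (1 + x) ^ 4 + ((k : ℝ) - 1) * x ^ 4 = (k : ℝ) * y ^ 4)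
    (h2 : (1 + x - y) ^ 4 + ((k : ℝ) - 1) * (x - y) ^ 4 = 2)
    (a : Fin (k + 1) → Fin k → ℝ)
    (ha : ∀ i : Fin (k + 1), ∀ m : Fin k,
      a i m = if (i : ℕ) = k then y else if (m : ℕ) = (i : ℕ) then 1 + x else x) :
    Function.Injective a ∧
    (∀ i j : Fin (k + 1), i ≠ j → norm4 (a i - a j) = (2 : ℝ) ^ ((1 : ℝ) / 4)) ∧
    (∀ i : Fin (k + 1), norm4 (a i) = (k : ℝ) ^ ((1 : ℝ) / 4) * y) := by
  obtain rfl := eq_simplexVertex x y ha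
  refine ⟨fun i j hij => ?_, fun i j => norm4_simplexVertex_sub h2, norm4_simplexVertex hy.le h1⟩
  by_contra hne
  have hdist := norm4_simplexVertex_sub h2 hne
  rw [hij, sub_self, norm4_zero] at hdist
  exact (Real.rpow_pos_of_pos two_pos _).ne hdist

/-- **The construction.** If `(x, y)` solves the system with `y > 0`, and
`a₁, …, a_k` are the `k` cyclic permutations of `(1+x, x, …, x)` with
`a_{k+1} = (y, …, y)`, then `{a₁, …, a_{k+1}}` is an equilateral set of `k+1` points
in `ℓ₄ᵏ` with common distance `2^{1/4}`, and each point has 4-norm `k^{1/4}·y`. -/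
theorem stmt18 (k : ℕ) (hk : 1 ≤ k) (x y : ℝ) (hy : 0 < y)
    (h1 : (1 + x) ^ 4 + ((k : ℝ) - 1) * x ^ 4 = (k : ℝ) * y ^ 4)
    (h2 : (1 + x - y) ^ 4 + ((k : ℝ) - 1) * (x - y) ^ 4 = 2)
    (a : Fin (k + 1) → Fin k → ℝ)
    (ha : ∀ i : Fin (k + 1), ∀ m : Fin k,
      a i m = if (i : ℕ) = k then y else if (m : ℕ) = (i : ℕ) then 1 + x else x) :
    Function.Injective a ∧
    (∀ i j : Fin (k + 1), i ≠ j → norm4 (a i - a j) = (2 : ℝ) ^ ((1 : ℝ) / 4)) ∧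
    (∀ i : Fin (k + 1), norm4 (a i) = (k : ℝ) ^ ((1 : ℝ) / 4) * y) :=
  stmt18_general k x y hy h1 h2 a ha
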